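/- (Necessity in Theorem 1(i)) Suppose there exists u* ∈ S^d such that the vectors (x̄_i)_{i ∈ I_{u*}} do not span ℝ^{d+1}, where I_{u*} = {i : y_i⟨x̄_i, u*⟩ ≤ 0}. Then the infimum over θ ∈ ℝ^{d+1} and unit v of v^⊤ H(θ) v is zero, where H(θ) = ∑_{i=1}^n ψ(y_i⟨x̄_i,θ⟩) x̄_i x̄_i^⊤; i.e., there is no m > 0 with H(θ) ⪰ m·I for all θ. -/

import Mathlib

open MeasureTheory Filter Real Topology

noncomputable def phi (z : ℝ) : ℝ := (Real.sqrt (2 * Real.pi))⁻¹ * Real.exp (-z ^ 2 / 2)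
noncomputable def Phi (z : ℝ) : ℝ := ∫ t in Set.Iic z, phi t
noncomputable def psi (z : ℝ) : ℝ := (phi z / Phi z) * (z + phi z / Phi z)

lemma phi_pos (z : ℝ) : 0 < phi z :=
  mul_pos (inv_pos.2 (Real.sqrt_pos.2 (by positivity))) (Real.exp_pos _)

lemma phi_eq (z : ℝ) : phi z = (Real.sqrt (2*Real.pi))⁻¹ * Real.exp (-(1/2) * z^2) := by
  rw [phi]; ring_nf

lemma integrable_phi : Integrable phi := by
  have := (integrable_exp_neg_mul_sq (by norm_num : (0:ℝ) < 1/2)).const_mul (Real.sqrt (2*Real.pi))⁻¹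
  exact this.congr (Filter.Eventually.of_forall fun z => (phi_eq z).symm)

lemma integrableOn_mul_phi (z : ℝ) : IntegrableOn (fun t => t * phi t) (Set.Iic z) := by
  have := ((integrable_mul_exp_neg_mul_sq (by norm_num : (0:ℝ) < 1/2)).const_mul
    (Real.sqrt (2*Real.pi))⁻¹)
  refine (this.congr (Filter.Eventually.of_forall fun t => ?_)).integrableOn
  rw [phi_eq]; ring

lemma Phi_pos (z : ℝ) : 0 < Phi z := by
  rw [Phi, setIntegral_pos_iff_support_of_nonneg_ae
    (Filter.Eventually.of_forall fun t => (phi_pos t).le) integrable_phi.integrableOn]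
  have : (Function.support phi) = Set.univ := by
    ext t; simp [Function.mem_support, (phi_pos t).ne']
  rw [this]
  simp [Real.volume_Iic]

lemma Phi_mono : Monotone Phi := fun _ _ hab =>
  setIntegral_mono_set integrable_phi.integrableOn
    (Filter.Eventually.of_forall fun t => (phi_pos t).le)
    (HasSubset.Subset.eventuallyLE (Set.Iic_subset_Iic.2 hab))

lemma phi_tendsto_atBot : Tendsto phi atBot (𝓝 0) := by
  have hsq : Tendsto (fun s : ℝ => -s^2/2) atBot atBot := by
    refine tendsto_atBot_mono' atBot (f₁ := fun s : ℝ => s/2) ?_ ?_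
    · filter_upwards [eventually_le_atBot (-1:ℝ)] with s hs
      nlinarith
    · exact tendsto_id.atBot_div_const (by norm_num)
  rw [show (0:ℝ) = (Real.sqrt (2*Real.pi))⁻¹ * 0 by ring]
  exact (Real.tendsto_exp_atBot.comp hsq).const_mul _

lemma integral_mul_phi (z : ℝ) : ∫ t in Set.Iic z, t * phi t = -phi z := by
  have hderiv : ∀ t ∈ Set.Iio z, HasDerivAt (fun s => -phi s) (t * phi t) t := by
    intro t _
    have h1 : HasDerivAt (fun s : ℝ => -s^2/2) (-t) t := by
      have := ((hasDerivAt_pow 2 t).neg).div_const 2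
      exact this.congr_deriv (by push_cast; ring)
    have h3 := ((h1.exp).const_mul (Real.sqrt (2*Real.pi))⁻¹).neg
    refine h3.congr_deriv ?_
    rw [phi]; ring
  have htend : Tendsto (fun s => -phi s) atBot (𝓝 0) := by
    rw [show (0:ℝ) = -0 by norm_num]
    exact phi_tendsto_atBot.neg
  have hcont : ContinuousWithinAt (fun s => -phi s) (Set.Iic z) z := by
    apply Continuous.continuousWithinAt
    exact (continuous_const.mul (Real.continuous_exp.comp (by continuity))).neg
  have := integral_Iic_of_hasDerivAt_of_tendsto hcont hderiv (integrableOn_mul_phi z) htend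
  rw [this]; ring

lemma mills (z : ℝ) : 0 ≤ z + phi z / Phi z := by
  rcases le_or_gt 0 z with hz | hz
  · exact add_nonneg hz (div_nonneg (phi_pos z).le (Phi_pos z).le)
  · have key : Phi z ≤ ∫ t in Set.Iic z, (t/z) * phi t := by
      rw [Phi]
      apply setIntegral_mono_on integrable_phi.integrableOn
      · exact ((integrableOn_mul_phi z).div_const z).congr
          (Filter.Eventually.of_forall fun t => by ring)
      · exact measurableSet_Iic
      · intro t ht
        have h1 : (1:ℝ) ≤ t / z := by
          rw [le_div_iff_of_neg hz]
          simpa using ht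
        nlinarith [phi_pos t]
    have heq : ∫ t in Set.Iic z, (t/z) * phi t = -phi z / z := by
      rw [show (fun t => (t/z) * phi t) = (fun t => (t * phi t) / z) by funext t; ring]
      rw [integral_div, integral_mul_phi]
    rw [heq] at key
    have hP := Phi_pos z
    rw [le_div_iff_of_neg hz] at key
    have : z + phi z / Phi z = (z * Phi z + phi z) / Phi z := by field_simp
    rw [this]
    apply div_nonneg _ hP.le
    nlinarith

lemma psi_nonneg (z : ℝ) : 0 ≤ psi z :=
  mul_nonneg (div_nonneg (phi_pos z).le (Phi_pos z).le) (mills z)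

lemma phi_tendsto_atTop : Tendsto phi atTop (𝓝 0) := by
  have hsq : Tendsto (fun s : ℝ => -s^2/2) atTop atBot := by
    apply Tendsto.atBot_div_const (by norm_num : (0:ℝ) < 2)
    exact tendsto_neg_atTop_atBot.comp (tendsto_pow_atTop two_ne_zero)
  rw [show (0:ℝ) = (Real.sqrt (2*Real.pi))⁻¹ * 0 by ring]
  exact (Real.tendsto_exp_atBot.comp hsq).const_mul _

lemma zphi_tendsto : Tendsto (fun z : ℝ => z * phi z) atTop (𝓝 0) := by
  apply squeeze_zero' (g := fun z : ℝ => (Real.sqrt (2*Real.pi))⁻¹ * (z * Real.exp (-z)))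
  · filter_upwards [eventually_ge_atTop (0:ℝ)] with z hz
    exact mul_nonneg hz (phi_pos z).le
  · filter_upwards [eventually_ge_atTop (2:ℝ)] with z hz
    rw [phi]
    have h1 : Real.exp (-z^2/2) ≤ Real.exp (-z) := by
      apply Real.exp_le_exp.2; nlinarith
    have hc : (0:ℝ) ≤ (Real.sqrt (2*Real.pi))⁻¹ := by positivity
    nlinarith [mul_nonneg (mul_nonneg hc (by linarith : (0:ℝ) ≤ z)) (sub_nonneg.2 h1)]
  · rw [show (0:ℝ) = (Real.sqrt (2*Real.pi))⁻¹ * 0 by ring]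
    apply Tendsto.const_mul
    simpa using tendsto_pow_mul_exp_neg_atTop_nhds_zero 1

lemma psi_tendsto : Tendsto psi atTop (𝓝 0) := by
  have hb : ∀ z : ℝ, 0 ≤ z → psi z ≤ (z * phi z) / Phi 0 + (phi z / Phi 0)^2 := by
    intro z hz
    have hP0 := Phi_pos 0
    have hPz := Phi_pos z
    have hle : Phi 0 ≤ Phi z := Phi_mono hz
    have h1 : phi z / Phi z ≤ phi z / Phi 0 :=
      div_le_div_of_nonneg_left (phi_pos z).le hP0 hle
    have h2 : 0 ≤ phi z / Phi z := div_nonneg (phi_pos z).le hPz.le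
    have h3 : 0 ≤ z + phi z / Phi z := mills z
    have key : psi z ≤ (phi z / Phi 0) * (z + phi z / Phi 0) := by
      rw [psi]
      apply mul_le_mul h1 (add_le_add_right h1 z) h3
      exact div_nonneg (phi_pos z).le hP0.le
    calc psi z ≤ (phi z / Phi 0) * (z + phi z / Phi 0) := key
      _ = (z * phi z) / Phi 0 + (phi z / Phi 0)^2 := by ring
  have hlim : Tendsto (fun z => (z * phi z) / Phi 0 + (phi z / Phi 0)^2) atTop (𝓝 0) := by
    have t1 : Tendsto (fun z => (z * phi z) / Phi 0) atTop (𝓝 0) := by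
      simpa using zphi_tendsto.div_const (Phi 0)
    have t2 : Tendsto (fun z => (phi z / Phi 0)^2) atTop (𝓝 0) := by
      have := (phi_tendsto_atTop.div_const (Phi 0)).pow 2
      simpa using this
    simpa using t1.add t2
  apply squeeze_zero' (Filter.Eventually.of_forall psi_nonneg)
    (by filter_upwards [eventually_ge_atTop (0:ℝ)] with z hz; exact hb z hz) hlim

theorem stmt11 {n d : ℕ} (y : Fin n → ℝ) (hy : ∀ i, y i = 1 ∨ y i = -1)
    (x : Fin n → EuclideanSpace ℝ (Fin (d + 1)))
    (u : EuclideanSpace ℝ (Fin (d + 1))) (hu : ‖u‖ = 1)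
    (hspan : Submodule.span ℝ (x '' {i | y i * (inner ℝ (x i) u : ℝ) ≤ 0}) ≠ ⊤) :
    (⨅ θ : EuclideanSpace ℝ (Fin (d + 1)),
      ⨅ v : Metric.sphere (0 : EuclideanSpace ℝ (Fin (d + 1))) 1,
        ∑ i, psi (y i * (inner ℝ (x i) θ : ℝ)) *
          (inner ℝ (x i) (v : EuclideanSpace ℝ (Fin (d + 1))) : ℝ) ^ 2) = 0 ∧
    ¬∃ m > (0 : ℝ), ∀ θ v : EuclideanSpace ℝ (Fin (d + 1)), ‖v‖ = 1 →
      m ≤ ∑ i, psi (y i * (inner ℝ (x i) θ : ℝ)) * (inner ℝ (x i) v : ℝ) ^ 2 := by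
  classical
  have hKbot : (Submodule.span ℝ (x '' {i | y i * (inner ℝ (x i) u : ℝ) ≤ 0}))ᗮ ≠ ⊥ :=
    fun h => hspan (Submodule.orthogonal_eq_bot_iff.mp h)
  obtain ⟨w, hwK, hw0⟩ := Submodule.exists_mem_ne_zero_of_ne_bot hKbot
  set v₀ : EuclideanSpace ℝ (Fin (d + 1)) := ‖w‖⁻¹ • w with hv₀def
  have hv₀norm : ‖v₀‖ = 1 := by
    rw [hv₀def, norm_smul, norm_inv, norm_norm, inv_mul_cancel₀ (norm_ne_zero_iff.2 hw0)]
  have hv₀orth : ∀ i : Fin n, y i * (inner ℝ (x i) u : ℝ) ≤ 0 → (inner ℝ (x i) v₀ : ℝ) = 0 := by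
    intro i hi
    have hx : x i ∈ Submodule.span ℝ (x '' {i | y i * (inner ℝ (x i) u : ℝ) ≤ 0}) :=
      Submodule.subset_span ⟨i, hi, rfl⟩
    have : (inner ℝ (x i) w : ℝ) = 0 := (Submodule.mem_orthogonal _ w).mp hwK (x i) hx
    rw [hv₀def, real_inner_smul_right, this, mul_zero]
  set g : EuclideanSpace ℝ (Fin (d + 1)) → EuclideanSpace ℝ (Fin (d + 1)) → ℝ := fun θ v => ∑ i, psi (y i * (inner ℝ (x i) θ : ℝ)) * (inner ℝ (x i) v : ℝ) ^ 2
    with hg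
  have h_nonneg : ∀ θ v, 0 ≤ g θ v := fun θ v =>
    Finset.sum_nonneg fun i _ => mul_nonneg (psi_nonneg _) (sq_nonneg _)
  -- crucial limit
  have h_tendsto : Tendsto (fun s : ℝ => g (s • u) v₀) atTop (𝓝 0) := by
    rw [hg]
    have : Tendsto (fun s : ℝ => ∑ i : Fin n,
        psi (y i * (inner ℝ (x i) ((s:ℝ) • u) : ℝ)) * (inner ℝ (x i) v₀ : ℝ) ^ 2) atTop
        (𝓝 (∑ _i : Fin n, (0:ℝ))) := by
      apply tendsto_finset_sum
      intro i _
      rcases le_or_gt (y i * (inner ℝ (x i) u : ℝ)) 0 with hi | hi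
      · have hz := hv₀orth i hi
        simp only [hz]
        simpa using tendsto_const_nhds (α := ℝ) (f := atTop) (a := (0:ℝ))
      · have harg : Tendsto (fun s : ℝ => y i * (inner ℝ (x i) ((s:ℝ) • u) : ℝ)) atTop atTop := by
          have : (fun s : ℝ => y i * (inner ℝ (x i) ((s:ℝ) • u) : ℝ))
              = fun s : ℝ => s * (y i * (inner ℝ (x i) u : ℝ)) := by
            funext s; rw [real_inner_smul_right]; ring
          rw [this]
          exact Tendsto.atTop_mul_const hi tendsto_id
        have := (psi_tendsto.comp harg).mul_const ((inner ℝ (x i) v₀ : ℝ) ^ 2)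
        simpa using this
    simpa using this
  haveI : Nonempty (Metric.sphere (0 : EuclideanSpace ℝ (Fin (d + 1))) 1) :=
    ⟨⟨v₀, by simpa [mem_sphere_zero_iff_norm] using hv₀norm⟩⟩
  set v₀' : Metric.sphere (0 : EuclideanSpace ℝ (Fin (d + 1))) 1 := ⟨v₀, by simpa [mem_sphere_zero_iff_norm] using hv₀norm⟩
  set F : EuclideanSpace ℝ (Fin (d + 1)) → ℝ := fun θ => ⨅ v : Metric.sphere (0 : EuclideanSpace ℝ (Fin (d + 1))) 1, g θ (v : EuclideanSpace ℝ (Fin (d + 1))) with hF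
  have hFbdd : ∀ θ, BddBelow (Set.range fun v : Metric.sphere (0 : EuclideanSpace ℝ (Fin (d + 1))) 1 => g θ (v : EuclideanSpace ℝ (Fin (d + 1)))) :=
    fun θ => ⟨0, fun r ⟨v, hv⟩ => hv ▸ h_nonneg θ v⟩
  have hF_nonneg : ∀ θ, 0 ≤ F θ := fun θ => le_ciInf fun v => h_nonneg θ v
  have hFrange : BddBelow (Set.range F) := ⟨0, fun r ⟨θ, hθ⟩ => hθ ▸ hF_nonneg θ⟩
  have key : ∀ s : ℝ, (⨅ θ, F θ) ≤ g (s • u) v₀ := by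
    intro s
    calc (⨅ θ, F θ) ≤ F (s • u) := ciInf_le hFrange _
      _ ≤ g (s • u) v₀ := ciInf_le (hFbdd _) v₀'
  have hinf_le : (⨅ θ, F θ) ≤ 0 :=
    ge_of_tendsto h_tendsto (Filter.Eventually.of_forall key)
  have hinf_ge : 0 ≤ (⨅ θ, F θ) := le_ciInf hF_nonneg
  constructor
  · exact le_antisymm hinf_le hinf_ge
  · rintro ⟨m, hm, h⟩
    have hmle : ∀ s : ℝ, m ≤ g (s • u) v₀ := fun s => h (s • u) v₀ hv₀norm
    have : m ≤ 0 := ge_of_tendsto h_tendsto (Filter.Eventually.of_forall hmle)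
    linarith
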